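/- arXiv:1307.8097 — 4 statements merged into one kernel-verified Lean document; each statement's English description precedes it below -/
import Mathlib

section
/- Let A be a symmetric n×n matrix over GF(2) with zero diagonal and let v be an index. Let A' be the matrix obtained from A by simple local complementation at v (i.e., for x ≠ y both distinct from v with A(v,x)=A(v,y)=1, the entry A'(x,y) = A(x,y)+1, and all other entries of A' equal those of A). Then the binary matroids represented by (I | A | I+A) and (I | A' | I+A') are isomorphic, via row operations (adding row v to each row w with A(v,w)=1) followed by interchanging the v-th columns of the first and third blocks and, for each neighbor w of v, interchanging the w-th columns of the second and third blocks. -/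
open Matrix

/-- The representing matrix `(I | A | I + A)` of the isotropic/transition matroid. -/
noncomputable def isoMat {n : ℕ} (A : Matrix (Fin n) (Fin n) (ZMod 2)) :
    Matrix (Fin n) ((Fin n ⊕ Fin n) ⊕ Fin n) (ZMod 2) :=
  Matrix.fromCols (Matrix.fromCols 1 A) (1 + A)

/-- Simple local complementation of a symmetric zero-diagonal `GF(2)` matrix at `v`:
toggle the entry `A x y` for all pairs `x ≠ y` of distinct neighbors of `v`. -/
def localComp {n : ℕ} (A : Matrix (Fin n) (Fin n) (ZMod 2)) (v : Fin n) :
    Matrix (Fin n) (Fin n) (ZMod 2) :=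
  fun x y =>
    if x ≠ v ∧ y ≠ v ∧ x ≠ y ∧ A v x = 1 ∧ A v y = 1 then A x y + 1 else A x y

/-- The column bijection: interchange the `v`-th columns of the first and third blocks,
and for each neighbor `w` of `v`, interchange the `w`-th columns of the second and
third blocks. -/
def colSwap {n : ℕ} (A : Matrix (Fin n) (Fin n) (ZMod 2)) (v : Fin n) :
    ((Fin n ⊕ Fin n) ⊕ Fin n) → ((Fin n ⊕ Fin n) ⊕ Fin n)
  | .inl (.inl x) => if x = v then .inr x else .inl (.inl x)
  | .inl (.inr x) => if A v x = 1 then .inr x else .inl (.inr x)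
  | .inr x => if x = v then .inl (.inl x)
      else if A v x = 1 then .inl (.inr x) else .inr x

/-!
The row operation `c ↦ c + c v • A v` (add row `v` to every neighbour row of `v`) is a linear
involution of `GF(2)ⁿ`, hence preserves the rank of every set of columns, and it carries each
column of `(I | A | I + A)` to the `colSwap`-corresponding column of `(I | A' | I + A')`. The
one real computation: for a neighbour `x` of `v`, column `x` of `A` plus the row `A v` toggles
the diagonal entry and the entries at the other neighbours of `v`, giving column `x` of
`I + A'`; by symmetry of `A`, column `v` of `I + A` goes to the unit vector `e_v`.
-/

lemma ZMod.two_eq_zero_or_one (a : ZMod 2) : a = 0 ∨ a = 1 := by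
  revert a; decide

theorem Submodule.finrank_span_image_of_comp_eq {R M N ι κ : Type*} [Ring R]
    [AddCommGroup M] [Module R M] [AddCommGroup N] [Module R N]
    (e : M ≃ₗ[R] N) {f : ι → M} {g : κ → N} {σ : ι → κ} (h : ∀ j, g (σ j) = e (f j))
    (S : Set ι) :
    Module.finrank R (span R (g '' (σ '' S))) = Module.finrank R (span R (f '' S)) := by
  have himage : g '' (σ '' S) = e.toLinearMap '' (f '' S) := by
    simp only [Set.image_image, h, LinearEquiv.coe_coe]
  rw [himage, ← Submodule.map_span, LinearEquiv.finrank_map_eq]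

section Shear

variable {R ι : Type*} [CommRing R] (v : ι) (r : ι → R)

noncomputable def shearMap : (ι → R) →ₗ[R] (ι → R) :=
  LinearMap.id + (LinearMap.proj v).smulRight r

lemma shearMap_apply (c : ι → R) : shearMap v r c = c + c v • r := rfl

lemma shearMap_involutive [CharP R 2] (hr : r v = 0) : Function.Involutive (shearMap v r) := by
  intro c
  simp only [shearMap_apply, Pi.add_apply, Pi.smul_apply, hr, smul_eq_mul, mul_zero, add_zero,
    add_assoc, ← add_smul, CharTwo.add_self_eq_zero, zero_smul]

noncomputable def shearEquiv [CharP R 2] (hr : r v = 0) : (ι → R) ≃ₗ[R] (ι → R) :=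
  .ofInvolutive (shearMap v r) (shearMap_involutive v r hr)

end Shear

namespace Matrix

variable {n : ℕ} {A : Matrix (Fin n) (Fin n) (ZMod 2)} {v : Fin n}

lemma localComp_apply_right_self (w : Fin n) : localComp A v w v = A w v := by
  simp [localComp]

lemma localComp_apply_of_eq_zero {x : Fin n} (hx : A v x = 0) (w : Fin n) :
    localComp A v w x = A w x := by
  simp [localComp, hx]

lemma one_add_localComp_apply_of_eq_one (hv : A v v = 0) {x : Fin n} (hx : A v x = 1)
    (w : Fin n) : (1 + localComp A v) w x = A w x + A v w := by
  have hxv : x ≠ v := by rintro rfl; simp_all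
  by_cases hwx : w = x
  · subst hwx; simp [localComp, hx, add_comm]
  by_cases hwv : w = v
  · subst hwv; simp [localComp, hv, hwx]
  rcases ZMod.two_eq_zero_or_one (A v w) with h | h <;> simp [localComp, *]

lemma shearMap_isoMat_col (hA : A.IsSymm) (hdiag : ∀ i, A i i = 0)
    (j : (Fin n ⊕ Fin n) ⊕ Fin n) :
    shearMap v (A v) ((isoMat A)ᵀ j) = (isoMat (localComp A v))ᵀ (colSwap A v j) := by
  funext w
  rcases j with (x | x) | x
  · by_cases hx : x = v
    · subst hx
      simp [isoMat, colSwap, shearMap_apply, localComp_apply_right_self, one_apply, hA.apply]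
    · simp [isoMat, colSwap, shearMap_apply, hx, Ne.symm hx]
  · rcases ZMod.two_eq_zero_or_one (A v x) with hvx | hvx
    · simp [isoMat, colSwap, shearMap_apply, hvx, localComp_apply_of_eq_zero]
    · simp [isoMat, colSwap, shearMap_apply, hvx, one_add_localComp_apply_of_eq_one (hdiag v) hvx]
  · by_cases hx : x = v
    · subst hx
      simp [isoMat, colSwap, shearMap_apply, hdiag, hA.apply, add_assoc, CharTwo.add_self_eq_zero]
    rcases ZMod.two_eq_zero_or_one (A v x) with hvx | hvx
    · simp [isoMat, colSwap, shearMap_apply, hx, Ne.symm hx, hvx, localComp_apply_of_eq_zero]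
    · have hcol := one_add_localComp_apply_of_eq_one (hdiag v) hvx w
      simp [isoMat, colSwap, shearMap_apply, hx, Ne.symm hx, hvx] at hcol ⊢
      rw [add_assoc, ← hcol, ← add_assoc, CharTwo.add_self_eq_zero, zero_add]

end Matrix

/-- Local complementation at `v` yields an isomorphic binary matroid: the explicit
column bijection `colSwap A v` preserves the rank of every set of columns of
`(I | A | I+A)` versus `(I | A' | I+A')`, where `A'` is the local complement. -/
theorem isoMat_localComp_matroid_iso (n : ℕ) (A : Matrix (Fin n) (Fin n) (ZMod 2))
    (hA : A.IsSymm) (hdiag : ∀ i, A i i = 0) (v : Fin n)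
    (S : Set ((Fin n ⊕ Fin n) ⊕ Fin n)) :
    Module.finrank (ZMod 2)
        (Submodule.span (ZMod 2) ((isoMat A)ᵀ '' S) : Submodule (ZMod 2) (Fin n → ZMod 2))
      = Module.finrank (ZMod 2)
        (Submodule.span (ZMod 2) ((isoMat (localComp A v))ᵀ '' (colSwap A v '' S)) :
          Submodule (ZMod 2) (Fin n → ZMod 2)) :=
  (Submodule.finrank_span_image_of_comp_eq (shearEquiv v (A v) (hdiag v))
    (fun j => (shearMap_isoMat_col hA hdiag j).symm) S).symm
end

section
/- Let n = n₁ + n₂ and suppose A is a symmetric n×n GF(2) matrix with zero diagonal in block form with zero diagonal blocks: A = [[0, B],[Bᵀ, 0]], where B is n₁×n₂. Consider the represented matroid M on 3n columns given by (I | A | I+A). Let T₁ consist of the first-block columns indexed by the first n₁ indices together with the second-block columns indexed by the last n₂ indices, and let T₂ consist of the first-block columns indexed by the last n₂ indices together with the second-block columns indexed by the first n₁ indices. Then r(T₁) + r(T₂) = n. -/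
open Matrix

/-- The rank function of the binary matroid represented by the columns of a
`GF(2)` matrix `N`. -/
noncomputable def binRank {m η : Type*} (N : Matrix m η (ZMod 2)) (X : Set η) : ℕ :=
  Module.finrank (ZMod 2)
    (Submodule.span (ZMod 2) (Nᵀ '' X) : Submodule (ZMod 2) (m → ZMod 2))

/-!
Since `A` has zero diagonal blocks, the columns of `A` indexed by the second part are supported
on the first part. The identity columns in `T₁` are the unit vectors of the first part, so `T₁`
spans exactly the coordinate subspace of the first part and has rank `n₁`; symmetrically `T₂`
spans the coordinate subspace of the second part and has rank `n₂`.
-/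

section UnitVectors

variable {K m ι : Type*} [Field K] [DecidableEq m] {g : ι → m}

theorem finrank_span_range_single [Finite m] [Fintype ι] (hg : Function.Injective g) :
    Module.finrank K (Submodule.span K (Set.range fun i => (Pi.single (g i) 1 : m → K))) =
      Fintype.card ι :=
  finrank_span_eq_card ((Pi.linearIndependent_single_one m K).comp g hg)

theorem mem_span_range_single_of_support_subset [Fintype m] {v : m → K}
    (hv : ∀ w ∉ Set.range g, v w = 0) :
    v ∈ Submodule.span K (Set.range fun i => (Pi.single (g i) 1 : m → K)) := by
  rw [pi_eq_sum_univ' v]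
  refine Submodule.sum_mem _ fun w _ => ?_
  by_cases hw : w ∈ Set.range g
  · obtain ⟨i, rfl⟩ := hw
    exact Submodule.smul_mem _ _ (Submodule.subset_span ⟨i, rfl⟩)
  · simp [hv w hw]

end UnitVectors

theorem binRank_eq_card_of_unit_columns {m η ι : Type*} [Fintype m] [DecidableEq m] [Fintype ι]
    (N : Matrix m η (ZMod 2)) (X : Set η) {g : ι → m} (hg : Function.Injective g)
    (hsupp : ∀ j ∈ X, ∀ w ∉ Set.range g, N w j = 0)
    (hunit : ∀ i, Pi.single (g i) 1 ∈ Nᵀ '' X) :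
    binRank N X = Fintype.card ι := by
  have hspan : Submodule.span (ZMod 2) (Nᵀ '' X) =
      Submodule.span (ZMod 2) (Set.range fun i => (Pi.single (g i) 1 : m → ZMod 2)) := by
    refine le_antisymm (Submodule.span_le.2 ?_) (Submodule.span_le.2 ?_)
    · rintro _ ⟨j, hj, rfl⟩
      exact mem_span_range_single_of_support_subset (hsupp j hj)
    · rintro _ ⟨i, rfl⟩
      exact Submodule.subset_span (hunit i)
  rw [binRank, hspan, finrank_span_range_single hg]

/-- For the bipartite adjacency matrix `A = [[0, B], [Bᵀ, 0]]`, consider the matroid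
represented by `(I | A | I + A)`.  Taking `T₁` to be the first-block columns on the
first `n₁` indices together with the second-block columns on the last `n₂` indices,
and `T₂` to be the first-block columns on the last `n₂` indices together with the
second-block columns on the first `n₁` indices, we get `r T₁ + r T₂ = n = n₁ + n₂`. -/
theorem bipartite_rank_add (n₁ n₂ : ℕ) (B : Matrix (Fin n₁) (Fin n₂) (ZMod 2)) :
    letI V := Fin n₁ ⊕ Fin n₂
    letI A : Matrix V V (ZMod 2) := Matrix.fromBlocks 0 B Bᵀ 0
    letI M : Matrix V ((V ⊕ V) ⊕ V) (ZMod 2) :=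
      Matrix.fromCols (Matrix.fromCols 1 A) (1 + A)
    letI T₁ : Set ((V ⊕ V) ⊕ V) :=
      {j | ∃ x : Fin n₁, j = Sum.inl (Sum.inl (Sum.inl x))} ∪
        {j | ∃ y : Fin n₂, j = Sum.inl (Sum.inr (Sum.inr y))}
    letI T₂ : Set ((V ⊕ V) ⊕ V) :=
      {j | ∃ y : Fin n₂, j = Sum.inl (Sum.inl (Sum.inr y))} ∪
        {j | ∃ x : Fin n₁, j = Sum.inl (Sum.inr (Sum.inl x))}
    binRank M T₁ + binRank M T₂ = n₁ + n₂ := by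
  -- The identity block of `M` is `diagonal 1`, whose columns are unit vectors.
  refine congrArg₂ (· + ·) ?_ ?_
  · rw [binRank_eq_card_of_unit_columns _ _ Sum.inl_injective, Fintype.card_fin]
    · rintro _ (⟨x, rfl⟩ | ⟨y, rfl⟩) (w | w) hw
      all_goals simp_all
    · exact fun x => ⟨_, Or.inl ⟨x, rfl⟩, col_diagonal (fun _ => 1) _⟩
  · rw [binRank_eq_card_of_unit_columns _ _ Sum.inr_injective, Fintype.card_fin]
    · rintro _ (⟨y, rfl⟩ | ⟨x, rfl⟩) (w | w) hw
      all_goals simp_all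
    · exact fun y => ⟨_, Or.inl ⟨y, rfl⟩, col_diagonal (fun _ => 1) _⟩
end

section
/- Let A be a symmetric n×n GF(2) matrix with zero diagonal, and let V = V₁ ⊔ V₂ be a partition of the index set. If, in the matroid represented by (I | A | I+A), the set T₁ = {first-block columns indexed by V₁} ∪ {second-block columns indexed by V₂} has rank |V₁|, then A(x,y) = 0 for all x, y ∈ V₂. -/
open Matrix

section SpanSingle

variable {K ι : Type*} [Field K] [DecidableEq ι]

theorem apply_eq_zero_of_mem_span_single {s : Set ι} {v : ι → K}
    (hv : v ∈ Submodule.span K ((fun i ↦ Pi.single i (1 : K)) '' s)) {x : ι} (hx : x ∉ s) :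
    v x = 0 := by
  have hle : Submodule.span K ((fun i ↦ Pi.single i (1 : K)) '' s) ≤
      LinearMap.ker (LinearMap.proj x : (ι → K) →ₗ[K] K) := by
    rw [Submodule.span_le]
    rintro _ ⟨i, hi, rfl⟩
    simp [ne_of_mem_of_not_mem hi hx |>.symm]
  exact hle hv

theorem finrank_span_single_image {s : Set ι} (hs : s.Finite) :
    Module.finrank K (Submodule.span K ((fun i ↦ Pi.single i (1 : K)) '' s)) = s.ncard := by
  have := hs.fintype
  have hli : LinearIndependent K (fun i : s ↦ (Pi.single (i : ι) (1 : K) : ι → K)) :=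
    (Pi.linearIndependent_single_one ι K).comp _ Subtype.val_injective
  rw [Set.image_eq_range, finrank_span_eq_card hli, ← Nat.card_eq_fintype_card,
    Nat.card_coe_set_eq]

end SpanSingle

theorem adj_zero_of_rank_eq_general (n : ℕ) (A : Matrix (Fin n) (Fin n) (ZMod 2))
    (V₁ : Set (Fin n))
    (hrk : binRank
        (Matrix.fromCols (Matrix.fromCols (1 : Matrix (Fin n) (Fin n) (ZMod 2)) A)
          ((1 : Matrix (Fin n) (Fin n) (ZMod 2)) + A))
        ({j | ∃ x ∈ V₁, j = Sum.inl (Sum.inl x)} ∪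
          {j | ∃ y ∈ V₁ᶜ, j = Sum.inl (Sum.inr y)}) = V₁.ncard) :
    ∀ x ∈ V₁ᶜ, ∀ y ∈ V₁ᶜ, A x y = 0 := by
  intro x hx y hy
  set N := Matrix.fromCols (Matrix.fromCols (1 : Matrix (Fin n) (Fin n) (ZMod 2)) A)
    ((1 : Matrix (Fin n) (Fin n) (ZMod 2)) + A)
  set T : Set ((Fin n ⊕ Fin n) ⊕ Fin n) := {j | ∃ x ∈ V₁, j = Sum.inl (Sum.inl x)} ∪
    {j | ∃ y ∈ V₁ᶜ, j = Sum.inl (Sum.inr y)}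
  set W := Submodule.span (ZMod 2) ((fun i ↦ Pi.single i (1 : ZMod 2)) '' V₁)
  have hWT : W ≤ Submodule.span (ZMod 2) (Nᵀ '' T) := by
    refine Submodule.span_mono ?_
    rintro _ ⟨z, hz, rfl⟩
    refine ⟨Sum.inl (Sum.inl z), Or.inl ⟨z, hz, rfl⟩, ?_⟩
    ext i
    simp [N, one_apply, Pi.single_apply, eq_comm]
  -- The unit columns of `V₁` already have rank `|V₁|`, so they span every column of `T`.
  have hWeq : W = Submodule.span (ZMod 2) (Nᵀ '' T) := Submodule.eq_of_le_of_finrank_le hWT <| by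
    rw [finrank_span_single_image V₁.toFinite]
    exact hrk.le
  have hAy : (fun i ↦ A i y) ∈ W := hWeq ▸ Submodule.subset_span
    ⟨Sum.inl (Sum.inr y), Or.inr ⟨y, hy, rfl⟩, by ext i; simp [N]⟩
  exact apply_eq_zero_of_mem_span_single hAy hx

/-- Let `A` be symmetric with zero diagonal over `GF(2)` and `V = V₁ ⊔ V₂` a
partition of indices. If, in the matroid represented by `(I | A | I + A)`, the set
consisting of the first-block columns indexed by `V₁` and the second-block columns
indexed by `V₂` has rank `|V₁|`, then `A x y = 0` for all `x, y ∈ V₂`. -/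
theorem adj_zero_of_rank_eq (n : ℕ) (A : Matrix (Fin n) (Fin n) (ZMod 2))
    (hA : A.IsSymm) (hdiag : ∀ i, A i i = 0) (V₁ : Set (Fin n))
    (hrk : binRank
        (Matrix.fromCols (Matrix.fromCols (1 : Matrix (Fin n) (Fin n) (ZMod 2)) A)
          ((1 : Matrix (Fin n) (Fin n) (ZMod 2)) + A))
        ({j | ∃ x ∈ V₁, j = Sum.inl (Sum.inl x)} ∪
          {j | ∃ y ∈ V₁ᶜ, j = Sum.inl (Sum.inr y)}) = V₁.ncard) :
    ∀ x ∈ V₁ᶜ, ∀ y ∈ V₁ᶜ, A x y = 0 :=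
  adj_zero_of_rank_eq_general n A V₁ hrk
end

section
/- A double occurrence word (a word of length 2n in n letters, each occurring exactly twice) has a disconnected interlacement graph if and only if some cyclic permutation of the word is a concatenation of two nonempty double occurrence words on disjoint letter sets. -/
/-- `w` is a double occurrence word: every letter occurs exactly twice. -/
def IsDOW {N n : ℕ} (w : Fin N → Fin n) : Prop :=
  ∀ l : Fin n, (Finset.univ.filter fun i => w i = l).card = 2

/-- Letters `a` and `b` occur in the interlaced pattern `a … b … a … b` in `w`. -/
def Interlaced {N : ℕ} {L : Type*} (w : Fin N → L) (a b : L) : Prop :=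
  ∃ i₁ j₁ i₂ j₂ : Fin N, i₁ < j₁ ∧ j₁ < i₂ ∧ i₂ < j₂ ∧
    w i₁ = a ∧ w i₂ = a ∧ w j₁ = b ∧ w j₂ = b

/-- The interlacement graph of a word: letters are adjacent iff they are interlaced. -/
def interlacementGraph {N : ℕ} {L : Type*} (w : Fin N → L) : SimpleGraph L :=
  SimpleGraph.fromRel (Interlaced w)

/-!
Call a factor `w[a, b)` of the word closed if its letters occur nowhere else. Whenever `x` and `y`
are interlaced, `y` occurs between two occurrences of `x`; hence the letters of a closed factor form
a union of connected components, and a proper closed factor disconnects the graph. Conversely, if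
the graph is disconnected, take a component `C` avoiding the first letter and let `[p, q]` be the
span of its occurrences. A letter occurring inside this span but outside `C` is jumped over by some
letter of `C` (otherwise `C` would split into the letters left and right of it, which cannot be
interlaced), so it cannot also occur outside the span without being interlaced with `C`. Thus
`w[p, q + 1)` is a closed factor with `0 < p`. Finally, a cyclic permutation of `w` splitting into
two words on disjoint letters is the same as a proper closed factor: one of the two words sits in
`w` without wrapping around.
-/

theorem SimpleGraph.Reachable.of_adj_closed {V : Type*} {G : SimpleGraph V} {P : V → Prop}
    (hP : ∀ ⦃x y⦄, P x → G.Adj x y → P y) {a b : V} (h : G.Reachable a b) (ha : P a) : P b := by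
  rw [SimpleGraph.reachable_iff_reflTransGen] at h
  induction h with
  | refl => exact ha
  | tail _ hadj ih => exact hP ih hadj

theorem IsDOW.surjective {N n : ℕ} {w : Fin N → Fin n} (hw : IsDOW w) : Function.Surjective w :=
  fun l => by
    obtain ⟨i, hi⟩ := Finset.card_pos.1 (by rw [hw l]; norm_num :
      0 < (Finset.univ.filter fun i => w i = l).card)
    exact ⟨i, (Finset.mem_filter.1 hi).2⟩

section

variable {N : ℕ} {L : Type*} {w : Fin N → L}

theorem Interlaced.adj {x y : L} (hxy : x ≠ y) (h : Interlaced w x y) :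
    (interlacementGraph w).Adj x y :=
  (SimpleGraph.fromRel_adj _ _ _).2 ⟨hxy, Or.inl h⟩

theorem interlacementGraph.exists_between_of_adj {x y : L} (h : (interlacementGraph w).Adj x y) :
    ∃ i j k : Fin N, i < j ∧ j < k ∧ w i = x ∧ w j = y ∧ w k = x := by
  obtain ⟨-, ⟨i₁, j₁, i₂, -, h₁, h₂, -, hi₁, hi₂, hj₁, -⟩ |
    ⟨-, j₁, i₂, j₂, -, h₂, h₃, -, hi₂, hj₁, hj₂⟩⟩ := (SimpleGraph.fromRel_adj _ _ _).1 h
  · exact ⟨i₁, j₁, i₂, h₁, h₂, hi₁, hj₁, hi₂⟩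
  · exact ⟨j₁, i₂, j₂, h₂, h₃, hj₁, hi₂, hj₂⟩

def IsClosedFactor (w : Fin N → L) (a b : ℕ) : Prop :=
  ∀ s t : Fin N, a ≤ s.val → s.val < b → (t.val < a ∨ b ≤ t.val) → w s ≠ w t

theorem not_connected_of_isClosedFactor {a b : ℕ} (h : IsClosedFactor w a b) (hab : a < b)
    (hbN : b ≤ N) (hproper : 0 < a ∨ b < N) : ¬ (interlacementGraph w).Connected := by
  let P : L → Prop := fun x => ∃ s : Fin N, a ≤ s.val ∧ s.val < b ∧ w s = x
  have hP : ∀ ⦃x y⦄, P x → (interlacementGraph w).Adj x y → P y := by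
    rintro x y ⟨s, has, hsb, rfl⟩ hxy
    have inside : ∀ t : Fin N, w t = w s → a ≤ t.val ∧ t.val < b := fun t ht => by
      by_contra hout
      exact h s t has hsb (by omega) ht.symm
    obtain ⟨i, j, k, hij, hjk, hi, hj, hk⟩ := interlacementGraph.exists_between_of_adj hxy
    have := inside i hi
    have := inside k hk
    exact ⟨j, by omega, by omega, hj⟩
  obtain ⟨t, ht⟩ : ∃ t : Fin N, t.val < a ∨ b ≤ t.val := by
    rcases hproper with ha | hb
    · exact ⟨⟨0, by omega⟩, Or.inl ha⟩
    · exact ⟨⟨b, hb⟩, Or.inr le_rfl⟩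
  intro hconn
  obtain ⟨s, has, hsb, hst⟩ := (hconn.preconnected (w ⟨a, by omega⟩) (w t)).of_adj_closed hP
    ⟨⟨a, by omega⟩, le_rfl, hab, rfl⟩
  exact h s t has hsb ht hst

theorem exists_straddling_of_reachable {s i j : Fin N}
    (hij : (interlacementGraph w).Reachable (w i) (w j))
    (hs : ¬ (interlacementGraph w).Reachable (w i) (w s)) (his : i < s) (hsj : s < j) :
    ∃ u v : Fin N, u < s ∧ s < v ∧ w u = w v ∧ (interlacementGraph w).Reachable (w i) (w u) := by
  by_contra! hno
  have before : ∀ z, (interlacementGraph w).Reachable (w i) z → (∃ t, w t = z ∧ t < s) →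
      ∀ t, w t = z → t < s := by
    rintro z hz ⟨t₀, rfl, ht₀⟩ t ht
    rcases lt_trichotomy t s with hts | rfl | hst
    · exact hts
    · exact absurd (ht ▸ hz) hs
    · exact absurd hz (hno t₀ t ht₀ hst ht.symm)
  have hP : ∀ ⦃z z'⦄, ((interlacementGraph w).Reachable (w i) z ∧ ∀ t, w t = z → t < s) →
      (interlacementGraph w).Adj z z' →
      ((interlacementGraph w).Reachable (w i) z' ∧ ∀ t, w t = z' → t < s) := by
    rintro z z' ⟨hz, hzs⟩ hzz'
    obtain ⟨-, j', k', -, hjk, -, hj', hk'⟩ := interlacementGraph.exists_between_of_adj hzz'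
    have hz' := hz.trans hzz'.reachable
    exact ⟨hz', before z' hz' ⟨j', hj', hjk.trans (hzs k' hk')⟩⟩
  have hjs := (hij.of_adj_closed hP ⟨.refl _, before _ (.refl _) ⟨i, rfl, his⟩⟩).2 j rfl
  exact absurd hsj hjs.asymm

theorem isClosedFactor_of_isLeast_of_isGreatest {c : L} {p q : Fin N}
    (hp : IsLeast {t | (interlacementGraph w).Reachable c (w t)} p)
    (hq : IsGreatest {t | (interlacementGraph w).Reachable c (w t)} q) :
    IsClosedFactor w p (q + 1) := by
  set G := interlacementGraph w
  intro s t hps hsq ht hst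
  by_cases hs : G.Reachable c (w s)
  · have := hp.2 (show G.Reachable c (w t) from hst ▸ hs)
    have := hq.2 (show G.Reachable c (w t) from hst ▸ hs)
    omega
  have hps' : p < s := lt_of_le_of_ne hps fun e => hs (e ▸ hp.1)
  have hsq' : s < q := lt_of_le_of_ne (Nat.lt_succ_iff.1 hsq) fun e => hs (e ▸ hq.1)
  obtain ⟨u, v, hus, hsv, huv, hu⟩ := exists_straddling_of_reachable (hp.1.symm.trans hq.1)
    (fun h' => hs (hp.1.trans h')) hps' hsq'
  have hcu := hp.1.trans hu
  have hne : w u ≠ w s := fun e => hs (e ▸ hcu)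
  have := hp.2 hcu
  have := hq.2 (show G.Reachable c (w v) from huv ▸ hcu)
  rcases ht with ht | ht
  · exact hs (hcu.trans (Interlaced.adj hne.symm
      ⟨t, u, s, v, by omega, hus, hsv, hst.symm, rfl, rfl, huv.symm⟩).symm.reachable)
  · exact hs (hcu.trans (Interlaced.adj hne
      ⟨u, s, v, t, hus, hsv, by omega, rfl, huv.symm, rfl, hst.symm⟩).reachable)

theorem exists_isClosedFactor_of_not_connected (hw : Function.Surjective w) (hN : 0 < N)
    (h : ¬ (interlacementGraph w).Connected) :
    ∃ a b : ℕ, 0 < a ∧ a < b ∧ b ≤ N ∧ IsClosedFactor w a b := by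
  classical
  obtain ⟨c, hc⟩ : ∃ c, ¬ (interlacementGraph w).Reachable (w ⟨0, hN⟩) c := by
    by_contra! hall
    exact h ((interlacementGraph w).connected_iff_exists_forall_reachable.2 ⟨_, hall⟩)
  let S : Set (Fin N) := {t | (interlacementGraph w).Reachable c (w t)}
  have hS : S.toFinset.Nonempty := let ⟨t, ht⟩ := hw c; ⟨t, by simp [S, ht]⟩
  set p := S.toFinset.min' hS
  set q := S.toFinset.max' hS
  have hp : IsLeast S p := Set.coe_toFinset S ▸ S.toFinset.isLeast_min' hS
  have hq : IsGreatest S q := Set.coe_toFinset S ▸ S.toFinset.isGreatest_max' hS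
  have hp0 : 0 < p.val := Nat.pos_of_ne_zero fun h0 =>
    hc ((show p = (⟨0, hN⟩ : Fin N) from Fin.ext h0) ▸ hp.1 : S ⟨0, hN⟩).symm
  exact ⟨p, q + 1, hp0, Nat.lt_succ_of_le (hp.2 hq.1), q.isLt,
    isClosedFactor_of_isLeast_of_isGreatest hp hq⟩

theorem IsClosedFactor.rotate_ne {a b : ℕ} (h : IsClosedFactor w a b) (hbN : b ≤ N)
    (i j : Fin N) (hi : i.val < b - a) (hj : b - a ≤ j.val) :
    w ⟨(i.val + a) % N, Nat.mod_lt _ i.pos⟩ ≠ w ⟨(j.val + a) % N, Nat.mod_lt _ j.pos⟩ := by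
  have hi' : (i.val + a) % N = i.val + a := Nat.mod_eq_of_lt (by omega)
  have hj' : (j.val + a) % N = if N ≤ j.val + a then j.val + a - N else j.val + a := by
    rw [Nat.add_mod_eq_ite, Nat.mod_eq_of_lt j.isLt, Nat.mod_eq_of_lt (by omega)]
  refine h _ _ (by simp only [hi']; omega) (by simp only [hi']; omega) ?_
  simp only [hj']
  split_ifs <;> omega

theorem exists_isClosedFactor_of_rotate_ne {k m : ℕ} (hm : 0 < m) (hmN : m < N)
    (h : ∀ i j : Fin N, i.val < m → m ≤ j.val →
      w ⟨(i.val + k) % N, Nat.mod_lt _ i.pos⟩ ≠ w ⟨(j.val + k) % N, Nat.mod_lt _ j.pos⟩) :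
    ∃ a b : ℕ, a < b ∧ b ≤ N ∧ (0 < a ∨ b < N) ∧ IsClosedFactor w a b := by
  let σ : Fin N → Fin N := fun i => ⟨(i.val + k) % N, Nat.mod_lt _ i.pos⟩
  have hk : k % N < N := Nat.mod_lt _ (by omega)
  have hσ : ∀ i : Fin N,
      (σ i).val = if N ≤ i.val + k % N then i.val + k % N - N else i.val + k % N := fun i => by
    simp only [σ, Nat.add_mod_eq_ite, Nat.mod_eq_of_lt i.isLt]
  have hσ_surj : Function.Surjective σ := Finite.surjective_of_injective fun i j hij => by
    have := hσ i
    have := hσ j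
    have := congrArg Fin.val hij
    ext
    split_ifs at * <;> omega
  -- If the block `[k % N, k % N + m)` wraps around, its complement `[k % N + m - N, k % N)` does not.
  by_cases hwrap : k % N + m ≤ N
  · refine ⟨k % N, k % N + m, by omega, hwrap, by omega, ?_⟩
    intro s t hs₁ hs₂ ht
    obtain ⟨i, rfl⟩ := hσ_surj s
    obtain ⟨j, rfl⟩ := hσ_surj t
    have := hσ i
    have := hσ j
    apply h i j <;> split_ifs at * <;> omega
  · refine ⟨k % N + m - N, k % N, by omega, hk.le, by omega, ?_⟩
    intro s t hs₁ hs₂ ht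
    obtain ⟨j, rfl⟩ := hσ_surj s
    obtain ⟨i, rfl⟩ := hσ_surj t
    have := hσ i
    have := hσ j
    refine (h i j ?_ ?_).symm <;> split_ifs at * <;> omega

end

/-- A double occurrence word has a disconnected interlacement graph iff some cyclic
permutation of it is the concatenation of two nonempty double occurrence words on
disjoint letter sets. -/
theorem interlacement_disconnected_iff_concat (n : ℕ) (hn : 1 ≤ n)
    (w : Fin (2 * n) → Fin n) (hw : IsDOW w) :
    ¬ (interlacementGraph w).Connected ↔
      ∃ k m : ℕ, 0 < m ∧ m < 2 * n ∧
        ∀ i j : Fin (2 * n), i.val < m → m ≤ j.val →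
          w ⟨(i.val + k) % (2 * n), Nat.mod_lt _ (by omega)⟩ ≠
            w ⟨(j.val + k) % (2 * n), Nat.mod_lt _ (by omega)⟩ := by
  constructor
  · intro h
    obtain ⟨a, b, ha, hab, hbN, hf⟩ :=
      exists_isClosedFactor_of_not_connected hw.surjective (by omega) h
    exact ⟨a, b - a, by omega, by omega, hf.rotate_ne hbN⟩
  · rintro ⟨k, m, hm, hmN, hsplit⟩
    obtain ⟨a, b, hab, hbN, hproper, hf⟩ := exists_isClosedFactor_of_rotate_ne hm hmN hsplit
    exact not_connected_of_isClosedFactor hf hab hbN hproper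
end
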